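/- arXiv:1703.09892 — 3 statements merged into one kernel-verified Lean document; each statement's English description precedes it below -/
import Mathlib

section
/- Let G = (V,E) be a locally finite graph, let μ be a mass distribution on G, let A ⊆ V, and let p > 0. Suppose v ∈ A with μ(v) > 0 and 0 < m ≤ μ(v), so that toppling mass m at v is a valid toppling move. Then N_p(G, A, T_v^m μ) ≤ N_p(G, A, μ); that is, performing a toppling move inside A cannot increase the minimum number of toppling moves needed to transport mass p outside of A. -/
open scoped Classical ENNReal

noncomputable section

variable {V : Type*}

/-- A mass distribution: a nonnegative, finitely supported function on the vertices. -/
def IsMassDist (μ : V → ℝ) : Prop :=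
  (∀ v, 0 ≤ μ v) ∧ (Function.support μ).Finite

/-- The unit point mass at a vertex `o`. -/
def pointMass (o : V) : V → ℝ := fun u => if u = o then 1 else 0

/-- The result of toppling mass `m` at the vertex `v`: remove mass `m` from `v` and
distribute it equally among the neighbors of `v`. -/
def topple (G : SimpleGraph V) [G.LocallyFinite] (μ : V → ℝ) (v : V) (m : ℝ) : V → ℝ :=
  fun u => μ u - (if u = v then m else 0) + (if G.Adj v u then m / (G.degree v : ℝ) else 0)

/-- `ToppleSeq G μ₀ t μ₁` : there is a sequence of `t` valid toppling moves
taking `μ₀` to `μ₁`. -/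
def ToppleSeq (G : SimpleGraph V) [G.LocallyFinite] (μ₀ : V → ℝ) (t : ℕ) (μ₁ : V → ℝ) : Prop :=
  ∃ μs : ℕ → V → ℝ, μs 0 = μ₀ ∧ μs t = μ₁ ∧
    ∀ i < t, ∃ v m, 0 < m ∧ m ≤ μs i v ∧ μs (i + 1) = topple G (μs i) v m

/-- `CanTransport G A p μ₀ t` : starting from `μ₀` there are `t` toppling moves after which
the total mass outside of `A` is at least `p`. -/
def CanTransport (G : SimpleGraph V) [G.LocallyFinite] (A : Set V) (p : ℝ)
    (μ₀ : V → ℝ) (t : ℕ) : Prop :=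
  ∃ μ₁ : V → ℝ, ToppleSeq G μ₀ t μ₁ ∧ p ≤ ∑' v : {v : V // v ∉ A}, μ₁ v

/-- The open ball of radius `n` around `o` in the graph distance. -/
def gball (G : SimpleGraph V) (o : V) (n : ℕ) : Set V := {u | G.dist o u < n}


/-- `minTopples G A p μ₀` : the minimum number of toppling moves needed to transport mass `p`
outside of the set `A`, starting from the mass distribution `μ₀` (with value `⊤` if this is
impossible). -/
def minTopples (G : SimpleGraph V) [G.LocallyFinite] (A : Set V) (p : ℝ)
    (μ₀ : V → ℝ) : ℕ∞ :=
  sInf {n : ℕ∞ | ∃ t : ℕ, n = (t : ℕ∞) ∧ CanTransport G A p μ₀ t}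

/-
Exchange argument, by induction on the length of an optimal sequence from `μ`. If its first
move topples at some `u ≠ v`, it commutes with toppling at `v` (toppling is linear in `μ`).
If it topples `m₁` at `v` itself, then for `m₁ < m` the induction hypothesis applies to toppling
`m - m₁` more at `v`, while for `m < m₁` toppling `m₁ - m` at `v` turns `T_v^m μ` into
`T_v^{m₁} μ` at the cost of one extra move. With no moves left, toppling at `v ∈ A` only adds
mass outside `A`.
-/

section Toppling

variable (G : SimpleGraph V) [G.LocallyFinite]

theorem topple_comm (μ : V → ℝ) (a b : V) (α β : ℝ) :
    topple G (topple G μ a α) b β = topple G (topple G μ b β) a α := by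
  funext u; unfold topple; ring

theorem topple_topple_self (μ : V → ℝ) (a : V) (α β : ℝ) :
    topple G (topple G μ a α) a β = topple G μ a (α + β) := by
  funext u; unfold topple; split_ifs <;> ring

theorem topple_apply_self (μ : V → ℝ) (a : V) (α : ℝ) : topple G μ a α a = μ a - α := by
  simp [topple]

theorem le_topple_apply_of_ne (μ : V → ℝ) {a u : V} {α : ℝ} (hα : 0 ≤ α) (hu : u ≠ a) :
    μ u ≤ topple G μ a α u := by
  have : 0 ≤ if G.Adj a u then α / (G.degree a : ℝ) else 0 := by positivity
  simp only [topple, if_neg hu]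
  linarith

theorem IsMassDist.topple {μ : V → ℝ} (hμ : IsMassDist μ) {a : V} {α : ℝ} (h0 : 0 ≤ α)
    (h1 : α ≤ μ a) : IsMassDist (topple G μ a α) := by
  refine ⟨fun u => ?_, ?_⟩
  · rcases eq_or_ne u a with rfl | hu
    · rw [topple_apply_self]; linarith
    · exact (hμ.1 u).trans (le_topple_apply_of_ne G μ h0 hu)
  · refine (hμ.2.union ((G.neighborSet a).toFinite.insert a)).subset ?_
    rw [Function.support_subset_iff']
    intro u hu
    simp only [Set.mem_union, Set.mem_insert_iff, SimpleGraph.mem_neighborSet,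
      Function.mem_support, not_or, not_not] at hu
    simp [_root_.topple, hu.1, hu.2.1, hu.2.2]

end Toppling

theorem IsMassDist.summable_subtype {μ : V → ℝ} (hμ : IsMassDist μ) (s : Set V) :
    Summable fun v : s => μ v :=
  summable_of_hasFiniteSupport (hμ.2.preimage Subtype.val_injective.injOn)

section Transport

variable {G : SimpleGraph V} [G.LocallyFinite]

theorem toppleSeq_zero {μ₀ μ₁ : V → ℝ} (h : ToppleSeq G μ₀ 0 μ₁) : μ₁ = μ₀ := by
  obtain ⟨μs, h0, h1, -⟩ := h
  rw [← h1, h0]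

theorem toppleSeq_zero_self (μ : V → ℝ) : ToppleSeq G μ 0 μ :=
  ⟨fun _ => μ, rfl, rfl, by simp⟩

theorem toppleSeq_succ_iff {μ₀ μ₁ : V → ℝ} {t : ℕ} :
    ToppleSeq G μ₀ (t + 1) μ₁ ↔
      ∃ u m, 0 < m ∧ m ≤ μ₀ u ∧ ToppleSeq G (topple G μ₀ u m) t μ₁ := by
  constructor
  · rintro ⟨μs, h0, ht, hstep⟩
    obtain ⟨u, m, hm0, hm, h1⟩ := hstep 0 t.succ_pos
    rw [h0] at hm h1
    exact ⟨u, m, hm0, hm, fun i => μs (i + 1), h1, ht,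
      fun i hi => hstep (i + 1) (by omega)⟩
  · rintro ⟨u, m, hm0, hm, μs, h0, ht, hstep⟩
    refine ⟨fun | 0 => μ₀ | i + 1 => μs i, rfl, ht, ?_⟩
    rintro (_ | i) hi
    · exact ⟨u, m, hm0, hm, h0⟩
    · exact hstep i (by omega)

theorem CanTransport.succ_of_topple {A : Set V} {p : ℝ} {μ : V → ℝ} {u : V} {m : ℝ} {t : ℕ}
    (hm0 : 0 < m) (hm : m ≤ μ u) (h : CanTransport G A p (topple G μ u m) t) :
    CanTransport G A p μ (t + 1) :=
  let ⟨μ₁, hseq, hp⟩ := h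
  ⟨μ₁, toppleSeq_succ_iff.2 ⟨u, m, hm0, hm, hseq⟩, hp⟩

theorem CanTransport.exists_topple {A : Set V} {p : ℝ} {μ : V → ℝ} {t : ℕ}
    (h : CanTransport G A p μ (t + 1)) :
    ∃ u m, 0 < m ∧ m ≤ μ u ∧ CanTransport G A p (topple G μ u m) t :=
  let ⟨μ₁, hseq, hp⟩ := h
  let ⟨u, m, hm0, hm, hseq'⟩ := toppleSeq_succ_iff.1 hseq
  ⟨u, m, hm0, hm, μ₁, hseq', hp⟩

theorem CanTransport.topple_zero {A : Set V} {p : ℝ} {μ : V → ℝ} (hμ : IsMassDist μ)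
    {v : V} (hv : v ∈ A) {m : ℝ} (hm0 : 0 ≤ m) (hm : m ≤ μ v) (h : CanTransport G A p μ 0) :
    CanTransport G A p (topple G μ v m) 0 := by
  obtain ⟨μ₁, hseq, hp⟩ := h
  rw [toppleSeq_zero hseq] at hp
  refine ⟨_, toppleSeq_zero_self _, hp.trans ?_⟩
  exact (hμ.summable_subtype _).tsum_le_tsum
    (fun u => le_topple_apply_of_ne G μ hm0 fun hu => u.2 (hu ▸ hv))
    ((hμ.topple G hm0 hm).summable_subtype _)

theorem CanTransport.exists_le_topple {A : Set V} {p : ℝ} {v : V} (hv : v ∈ A) {t : ℕ}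
    {μ : V → ℝ} (hμ : IsMassDist μ) {m : ℝ} (hm0 : 0 < m) (hm : m ≤ μ v)
    (h : CanTransport G A p μ t) : ∃ t' ≤ t, CanTransport G A p (topple G μ v m) t' := by
  induction t generalizing μ m with
  | zero => exact ⟨0, le_rfl, h.topple_zero hμ hv hm0.le hm⟩
  | succ t ih =>
    obtain ⟨u, m₁, hm₁0, hm₁, h₁⟩ := h.exists_topple
    have hμ₁ := hμ.topple G hm₁0.le hm₁
    rcases eq_or_ne u v with rfl | huv
    · rcases lt_or_ge m₁ m with hlt | hle
      · obtain ⟨t', ht', h'⟩ := ih hμ₁ (sub_pos.2 hlt)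
          (by rw [topple_apply_self]; linarith) h₁
        rw [topple_topple_self, add_sub_cancel] at h'
        exact ⟨t', by omega, h'⟩
      rcases hle.eq_or_lt with rfl | hlt
      · exact ⟨t, by omega, h₁⟩
      refine ⟨t + 1, le_rfl, CanTransport.succ_of_topple (sub_pos.2 hlt)
        (by rw [topple_apply_self]; linarith) ?_⟩
      rwa [topple_topple_self, add_sub_cancel]
    · obtain ⟨t', ht', h'⟩ :=
        ih hμ₁ hm0 (hm.trans (le_topple_apply_of_ne G μ hm₁0.le huv.symm)) h₁
      rw [topple_comm] at h'
      exact ⟨t' + 1, by omega,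
        h'.succ_of_topple hm₁0 (hm₁.trans (le_topple_apply_of_ne G μ hm0.le huv))⟩

end Transport

theorem smoothing_le_general {V : Type*} (G : SimpleGraph V) [G.LocallyFinite]
    (μ : V → ℝ) (hμ : IsMassDist μ) (A : Set V) (p : ℝ)
    (v : V) (hv : v ∈ A) (m : ℝ) (hm0 : 0 < m) (hm : m ≤ μ v) :
    minTopples G A p (topple G μ v m) ≤ minTopples G A p μ := by
  refine le_sInf ?_
  rintro _ ⟨t, rfl, h⟩
  obtain ⟨t', ht', h'⟩ := h.exists_le_topple hv hμ hm0 hm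
  calc minTopples G A p (topple G μ v m) ≤ t' := sInf_le ⟨t', rfl, h'⟩
    _ ≤ t := by exact_mod_cast ht'

/-- **Smoothing weakly reduces the minimum number of toppling moves**
(Florescu–Peres–Rácz, Lemma 3.1). Let `μ` be a mass distribution on a locally finite graph `G`,
let `A ⊆ V` and `p > 0`. If `v ∈ A` and `0 < m ≤ μ(v)` (so that toppling mass `m` at `v` is a
valid toppling move), then `N_p(G, A, T_v^m μ) ≤ N_p(G, A, μ)`. -/
theorem smoothing_le {V : Type*} (G : SimpleGraph V) [G.LocallyFinite]
    (μ : V → ℝ) (hμ : IsMassDist μ) (A : Set V) (p : ℝ) (hp : 0 < p)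
    (v : V) (hv : v ∈ A) (m : ℝ) (hm0 : 0 < m) (hm : m ≤ μ v) :
    minTopples G A p (topple G μ v m) ≤ minTopples G A p μ :=
  smoothing_le_general G μ hμ A p v hv m hm0 hm

end
end

section
/- Let G = (V,E) be a locally finite graph, let A ⊆ V, let p > 0, and let μ₀ be a mass distribution on G. Let N_p^full(G, A, μ₀) denote the minimum number of toppling moves needed to transport mass p outside of A when every toppling move is required to topple all the mass at the chosen vertex (i.e., m_i = μ_{i−1}(v_i) at every step). Then N_p(G, A, μ₀) = N_p^full(G, A, μ₀); that is, restricting to full topplings does not change the minimum number of toppling moves. -/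
open scoped Classical ENNReal

noncomputable section

variable {V : Type*}

/-- `CanTransportFull G A p μ₀ t` : starting from `μ₀` there are `t` full toppling moves
(each toppling all of the mass at the chosen vertex) after which the total mass outside of `A`
is at least `p`. -/
def CanTransportFull (G : SimpleGraph V) [G.LocallyFinite] (A : Set V) (p : ℝ)
    (μ₀ : V → ℝ) (t : ℕ) : Prop :=
  ∃ μs : ℕ → V → ℝ, μs 0 = μ₀ ∧
    (∀ i < t, ∃ v, 0 < μs i v ∧ μs (i + 1) = topple G (μs i) v (μs i v)) ∧
    p ≤ ∑' v : {v : V // v ∉ A}, μs t v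

/-- The minimum number of full toppling moves needed to transport mass `p` outside of `A`. -/
def minTopplesFull (G : SimpleGraph V) [G.LocallyFinite] (A : Set V) (p : ℝ)
    (μ₀ : V → ℝ) : ℕ∞ :=
  sInf {n : ℕ∞ | ∃ t : ℕ, n = (t : ℕ∞) ∧ CanTransportFull G A p μ₀ t}

/-! Write `Δ` for the Laplacian acting on mass, so that toppling mass `m` at `v` adds `Δ (m δ_v)`.
Any toppling sequence is simulated, move by move and never with more moves, in two passes.

First, moves outside `A` are dropped and moves inside `A` are capped at the mass actually
present. The mass thereby missing inside `A` is recorded as a nonnegative debt `ρ`; since toppling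
never creates mass, the simulation stays ahead outside `A` by at least `∑ ρ`.

Second, a sequence of moves inside `A` is replayed with full topplings at the same vertices.
Then the new configuration is `μ + Δ c` for an odometer difference `c ≥ 0` supported on `A`,
and `Δ c ≥ 0` outside `A`. -/

section Laplacian

variable (G : SimpleGraph V) [G.LocallyFinite]

def laplacian : (V → ℝ) →ₗ[ℝ] V → ℝ where
  toFun c u := ∑ x ∈ G.neighborFinset u, c x / G.degree x - c u
  map_add' c d := by
    ext u
    simp only [Pi.add_apply, add_div, Finset.sum_add_distrib]
    ring
  map_smul' k c := by
    ext u
    simp only [Pi.smul_apply, smul_eq_mul, RingHom.id_apply, mul_div_assoc, ← Finset.mul_sum]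
    ring

variable {G}

lemma laplacian_apply (c : V → ℝ) (u : V) :
    laplacian G c u = ∑ x ∈ G.neighborFinset u, c x / G.degree x - c u := rfl

lemma laplacian_single_apply (v : V) (k : ℝ) (u : V) :
    laplacian G (Pi.single v k) u
      = (if G.Adj v u then k / G.degree v else 0) - (if u = v then k else 0) := by
  have hsum : ∑ x ∈ G.neighborFinset u, (Pi.single v k : V → ℝ) x / (G.degree x : ℝ)
      = ∑ x ∈ G.neighborFinset u, (Pi.single v (k / G.degree v) : V → ℝ) x :=
    Finset.sum_congr rfl fun x _ => by
      rcases eq_or_ne x v with rfl | hxv <;> simp [*]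
  rw [laplacian_apply, hsum, Finset.sum_pi_single']
  simp only [SimpleGraph.mem_neighborFinset, G.adj_comm, Pi.single_apply]

lemma topple_eq_add_laplacian (μ : V → ℝ) (v : V) (m : ℝ) :
    topple G μ v m = μ + laplacian G (Pi.single v m) := by
  ext u
  rw [Pi.add_apply, laplacian_single_apply, topple]
  ring

lemma topple_zero (μ : V → ℝ) (v : V) : topple G μ v 0 = μ := by
  simp [topple_eq_add_laplacian]

lemma laplacian_apply_nonneg {c : V → ℝ} (hc : 0 ≤ c) {u : V} (hu : c u = 0) :
    0 ≤ laplacian G c u := by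
  rw [laplacian_apply, hu, sub_zero]
  exact Finset.sum_nonneg fun x _ => div_nonneg (hc x) (Nat.cast_nonneg _)

lemma add_laplacian_apply_nonneg {c : V → ℝ} (hc : 0 ≤ c) (u : V) :
    0 ≤ c u + laplacian G c u := by
  rw [laplacian_apply, add_sub_cancel]
  exact Finset.sum_nonneg fun x _ => div_nonneg (hc x) (Nat.cast_nonneg _)

lemma laplacian_single_apply_self (v : V) (k : ℝ) : laplacian G (Pi.single v k) v = -k := by
  simp [laplacian_single_apply]

lemma laplacian_single_apply_of_notMem {v u : V} (k : ℝ) (hu : u ∉ insert v (G.neighborFinset v)) :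
    laplacian G (Pi.single v k) u = 0 := by
  simp only [Finset.mem_insert, SimpleGraph.mem_neighborFinset, not_or] at hu
  simp [laplacian_single_apply, hu.1, hu.2]

lemma summable_laplacian_single (v : V) (k : ℝ) : Summable (laplacian G (Pi.single v k)) :=
  summable_of_hasFiniteSupport <| (insert v (G.neighborFinset v)).finite_toSet.subset
    fun _ hu => by_contra fun h => hu (laplacian_single_apply_of_notMem k h)

lemma Summable.topple {μ : V → ℝ} (hμ : Summable μ) (v : V) (m : ℝ) :
    Summable (topple G μ v m) := by
  rw [topple_eq_add_laplacian]
  exact hμ.add (summable_laplacian_single v m)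

/-- Mass is lost only at an isolated vertex, where `k / 0 = 0`. -/
lemma tsum_laplacian_single_nonpos (v : V) {k : ℝ} (hk : 0 ≤ k) :
    ∑' u, laplacian G (Pi.single v k) u ≤ 0 := by
  rw [tsum_eq_sum fun _ => laplacian_single_apply_of_notMem k,
    Finset.sum_insert (G.notMem_neighborFinset_self v)]
  have hnbr : ∑ u ∈ G.neighborFinset v, laplacian G (Pi.single v k) u
      = G.degree v * (k / G.degree v) := by
    rw [Finset.sum_congr rfl fun u hu => ?_, Finset.sum_const, G.card_neighborFinset_eq_degree,
      nsmul_eq_mul]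
    rw [SimpleGraph.mem_neighborFinset] at hu
    simp [laplacian_single_apply, hu, hu.ne']
  rw [hnbr, laplacian_single_apply_self]
  rcases eq_or_ne (G.degree v) 0 with h0 | h0
  · simp [h0, hk]
  · rw [mul_div_cancel₀ _ (Nat.cast_ne_zero.mpr h0), neg_add_cancel]

end Laplacian

section MassOutside

variable (A : Set V)

def massOut (μ : V → ℝ) : ℝ := ∑' v : {v : V // v ∉ A}, μ v

variable {A} {μ ν : V → ℝ}

lemma massOut_add (hμ : Summable μ) (hν : Summable ν) :
    massOut A (μ + ν) = massOut A μ + massOut A ν :=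
  (hμ.subtype _).tsum_add (hν.subtype _)

lemma massOut_mono (hμ : Summable μ) (hν : Summable ν) (h : ∀ u ∉ A, μ u ≤ ν u) :
    massOut A μ ≤ massOut A ν :=
  Summable.tsum_le_tsum (fun u => h u u.2) (hμ.subtype _) (hν.subtype _)

lemma massOut_add_tsum_indicator (hμ : Summable μ) :
    massOut A μ + ∑' u, A.indicator μ u = ∑' u, μ u := by
  rw [← tsum_subtype, add_comm]
  exact (hμ.subtype _).tsum_add_tsum_compl (hμ.subtype _)

end MassOutside

section Chain

variable {α : Type*} {R S : α → α → Prop}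

def Chain (R : α → α → Prop) (a : α) (t : ℕ) (b : α) : Prop :=
  ∃ s : ℕ → α, s 0 = a ∧ s t = b ∧ ∀ i < t, R (s i) (s (i + 1))

lemma chain_zero_iff {a b : α} : Chain R a 0 b ↔ a = b :=
  ⟨fun ⟨_, h0, h1, _⟩ => h0.symm.trans h1, fun h => ⟨fun _ => a, rfl, h, by simp⟩⟩

lemma Chain.cons {a b c : α} {t : ℕ} (h : R a b) (hc : Chain R b t c) : Chain R a (t + 1) c := by
  obtain ⟨s, h0, h1, hs⟩ := hc
  refine ⟨fun i => Nat.casesOn i a s, rfl, h1, fun i hi => ?_⟩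
  cases i with
  | zero => simpa [h0] using h
  | succ j => exact hs j (by omega)

lemma Chain.uncons {a c : α} {t : ℕ} (hc : Chain R a (t + 1) c) :
    ∃ b, R a b ∧ Chain R b t c := by
  obtain ⟨s, h0, h1, hs⟩ := hc
  exact ⟨s 1, h0 ▸ hs 0 t.succ_pos, fun i => s (i + 1), rfl, h1, fun i hi => hs (i + 1) (by omega)⟩

lemma Chain.simulate (I : α → α → Prop)
    (hstep : ∀ a a' b, I a b → R a a' → ∃ b', (b' = b ∨ S b b') ∧ I a' b')
    {a a₁ b : α} {t : ℕ} (hab : I a b) (hc : Chain R a t a₁) :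
    ∃ t' ≤ t, ∃ b₁, Chain S b t' b₁ ∧ I a₁ b₁ := by
  induction t generalizing a b with
  | zero => exact ⟨0, le_rfl, b, chain_zero_iff.mpr rfl, chain_zero_iff.mp hc ▸ hab⟩
  | succ t ih =>
    obtain ⟨a', hR, hc'⟩ := hc.uncons
    obtain ⟨b', hb', hI⟩ := hstep a a' b hab hR
    obtain ⟨t', ht', b₁, hc₁, hI₁⟩ := ih hI hc'
    rcases hb' with rfl | hS
    · exact ⟨t', ht'.trans t.le_succ, b₁, hc₁, hI₁⟩
    · exact ⟨t' + 1, Nat.succ_le_succ ht', b₁, Chain.cons hS hc₁, hI₁⟩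

end Chain

section Moves

variable (G : SimpleGraph V) [G.LocallyFinite]

def ToppleMove (B : Set V) (μ μ' : V → ℝ) : Prop :=
  ∃ v ∈ B, ∃ m, 0 < m ∧ m ≤ μ v ∧ μ' = topple G μ v m

def FullToppleMove (μ μ' : V → ℝ) : Prop :=
  ∃ v, 0 < μ v ∧ μ' = topple G μ v (μ v)

end Moves

section DropOutsideMoves

structure IsDebtCover (A : Set V) (μ ν ρ : V → ℝ) : Prop where
  summable_left : Summable μ
  summable_right : Summable ν
  summable_debt : Summable ρ
  debt_nonneg : ∀ x, 0 ≤ ρ x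
  le_add_debt : ∀ x ∈ A, μ x ≤ ν x + ρ x
  massOut_add_debt_le : massOut A μ + ∑' x, ρ x ≤ massOut A ν

variable {G : SimpleGraph V} [G.LocallyFinite] {A : Set V}

lemma IsDebtCover.refl {μ : V → ℝ} (hμ : Summable μ) : IsDebtCover A μ μ 0 :=
  ⟨hμ, hμ, summable_zero, fun _ => le_rfl, fun x _ => by simp, by simp⟩

lemma IsDebtCover.massOut_le {μ ν ρ : V → ℝ} (h : IsDebtCover A μ ν ρ) :
    massOut A μ ≤ massOut A ν := by
  have : 0 ≤ ∑' x, ρ x := tsum_nonneg h.debt_nonneg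
  linarith [h.massOut_add_debt_le]

lemma IsDebtCover.topple_of_le {μ ν ρ : V → ℝ} (h : IsDebtCover A μ ν ρ) (v : V) {m m' : ℝ}
    (hm'm : m' ≤ m) (hdebt : v ∈ A → m - m' ≤ ρ v) :
    IsDebtCover A (topple G μ v m) (topple G ν v m')
      (ρ + A.indicator (laplacian G (Pi.single v (m - m')))) := by
  have hsplit : laplacian G (Pi.single v m)
      = laplacian G (Pi.single v m') + laplacian G (Pi.single v (m - m')) := by
    rw [← map_add, ← Pi.single_add, add_sub_cancel]
  have hsum := summable_laplacian_single (G := G) v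
  rw [topple_eq_add_laplacian, topple_eq_add_laplacian]
  refine ⟨h.summable_left.add (hsum m), h.summable_right.add (hsum m'),
    h.summable_debt.add ((hsum _).indicator A), fun x => ?_, fun x hx => ?_, ?_⟩
  · by_cases hx : x ∈ A
    · rcases eq_or_ne x v with rfl | hxv
      · simp only [Pi.add_apply, Set.indicator_of_mem hx, laplacian_single_apply_self]
        linarith [hdebt hx]
      · have hspread := laplacian_apply_nonneg (G := G)
          (Pi.single_nonneg.mpr (sub_nonneg.mpr hm'm)) (Pi.single_eq_of_ne hxv _)
        simp only [Pi.add_apply, Set.indicator_of_mem hx]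
        linarith [h.debt_nonneg x]
    · simpa [Set.indicator_of_notMem hx] using h.debt_nonneg x
  · simp only [Pi.add_apply, Set.indicator_of_mem hx, hsplit]
    linarith [h.le_add_debt x hx]
  · have hmass := massOut_add_tsum_indicator (A := A) (hsum (m - m'))
    have hnonpos := tsum_laplacian_single_nonpos (G := G) v (sub_nonneg.mpr hm'm)
    simp only [Pi.add_apply]
    rw [massOut_add h.summable_left (hsum m), massOut_add h.summable_right (hsum m'),
      h.summable_debt.tsum_add ((hsum _).indicator A), hsplit,
      massOut_add (hsum m') (hsum _)]
    linarith [h.massOut_add_debt_le]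

lemma IsDebtCover.exists_toppleMove {μ μ' ν ρ : V → ℝ} (h : IsDebtCover A μ ν ρ)
    (hmove : ToppleMove G Set.univ μ μ') :
    ∃ ν', (ν' = ν ∨ ToppleMove G A ν ν') ∧ ∃ ρ', IsDebtCover A μ' ν' ρ' := by
  obtain ⟨v, -, m, hm, hmv, rfl⟩ := hmove
  by_cases hv : v ∈ A ∧ 0 < ν v
  · refine ⟨topple G ν v (min m (ν v)), Or.inr ⟨v, hv.1, _, lt_min hm hv.2, min_le_right _ _, rfl⟩,
      _, h.topple_of_le v (min_le_left _ _) fun hvA => ?_⟩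
    rcases min_cases m (ν v) with ⟨he, _⟩ | ⟨he, _⟩ <;> rw [he] <;>
      linarith [h.debt_nonneg v, h.le_add_debt v hvA]
  · refine ⟨topple G ν v 0, Or.inl (topple_zero ν v), _, h.topple_of_le v hm.le fun hvA => ?_⟩
    have hνv : ν v ≤ 0 := not_lt.mp fun hpos => hv ⟨hvA, hpos⟩
    linarith [h.le_add_debt v hvA]

theorem Chain.exists_toppleMove_mem {μ₀ μ : V → ℝ} {t : ℕ} (hμ₀ : Summable μ₀)
    (hc : Chain (ToppleMove G Set.univ) μ₀ t μ) :
    ∃ t' ≤ t, ∃ ν, Chain (ToppleMove G A) μ₀ t' ν ∧ massOut A μ ≤ massOut A ν := by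
  obtain ⟨t', ht', ν, hν, ρ, hρ⟩ := hc.simulate (fun μ ν => ∃ ρ, IsDebtCover A μ ν ρ)
    (fun _ _ _ ⟨_, h⟩ hmove => h.exists_toppleMove hmove) ⟨0, IsDebtCover.refl hμ₀⟩
  exact ⟨t', ht', ν, hν, hρ.massOut_le⟩

end DropOutsideMoves

section FullTopplings

structure IsOdometerShift (G : SimpleGraph V) [G.LocallyFinite] (A : Set V) (μ ν c : V → ℝ) :
    Prop where
  summable_left : Summable μ
  summable_right : Summable ν
  nonneg : ∀ x, 0 ≤ c x
  eq_zero_of_notMem : ∀ x ∉ A, c x = 0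
  eq_add_laplacian : ν = μ + laplacian G c

variable {G : SimpleGraph V} [G.LocallyFinite] {A : Set V}

lemma IsOdometerShift.refl {μ : V → ℝ} (hμ : Summable μ) : IsOdometerShift G A μ μ 0 :=
  ⟨hμ, hμ, fun _ => le_rfl, fun _ _ => rfl, by simp⟩

lemma IsOdometerShift.massOut_le {μ ν c : V → ℝ} (h : IsOdometerShift G A μ ν c) :
    massOut A μ ≤ massOut A ν := by
  refine massOut_mono h.summable_left h.summable_right fun u hu => ?_
  rw [h.eq_add_laplacian, Pi.add_apply, le_add_iff_nonneg_right]
  exact laplacian_apply_nonneg h.nonneg (h.eq_zero_of_notMem u hu)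

/-- The new odometer difference stays nonnegative at `v` because
`c v + ν v = μ v + ∑_{x ∼ v} c x / deg x ≥ m`. -/
lemma IsOdometerShift.topple_of_le {μ ν c : V → ℝ} (h : IsOdometerShift G A μ ν c) {v : V}
    (hv : v ∈ A) {m k : ℝ} (hmv : m ≤ μ v) (hk : ν v ≤ k) :
    IsOdometerShift G A (topple G μ v m) (topple G ν v k) (c + Pi.single v (k - m)) := by
  refine ⟨h.summable_left.topple v m, h.summable_right.topple v k, fun x => ?_, fun x hx => ?_, ?_⟩
  · rcases eq_or_ne x v with rfl | hxv
    · have hνx := congrFun h.eq_add_laplacian x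
      simp only [Pi.add_apply, Pi.single_eq_same] at hνx ⊢
      linarith [add_laplacian_apply_nonneg (G := G) h.nonneg x]
    · simpa [hxv] using h.nonneg x
  · have hxv : x ≠ v := fun hxv => hx (hxv ▸ hv)
    simp [hxv, h.eq_zero_of_notMem x hx]
  · rw [topple_eq_add_laplacian, topple_eq_add_laplacian, h.eq_add_laplacian, map_add,
      Pi.single_sub, map_sub]
    abel

lemma IsOdometerShift.exists_fullToppleMove {μ μ' ν c : V → ℝ} (h : IsOdometerShift G A μ ν c)
    (hmove : ToppleMove G A μ μ') :
    ∃ ν', (ν' = ν ∨ FullToppleMove G ν ν') ∧ ∃ c', IsOdometerShift G A μ' ν' c' := by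
  obtain ⟨v, hv, m, -, hmv, rfl⟩ := hmove
  by_cases hν : 0 < ν v
  · exact ⟨_, Or.inr ⟨v, hν, rfl⟩, _, h.topple_of_le hv hmv le_rfl⟩
  · exact ⟨_, Or.inl (topple_zero ν v), _, h.topple_of_le hv hmv (not_lt.mp hν)⟩

theorem Chain.exists_fullToppleMove {μ₀ μ : V → ℝ} {t : ℕ} (hμ₀ : Summable μ₀)
    (hc : Chain (ToppleMove G A) μ₀ t μ) :
    ∃ t' ≤ t, ∃ ν, Chain (FullToppleMove G) μ₀ t' ν ∧ massOut A μ ≤ massOut A ν := by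
  obtain ⟨t', ht', ν, hν, c, hc⟩ := hc.simulate (fun μ ν => ∃ c, IsOdometerShift G A μ ν c)
    (fun _ _ _ ⟨_, h⟩ hmove => h.exists_fullToppleMove hmove) ⟨0, IsOdometerShift.refl hμ₀⟩
  exact ⟨t', ht', ν, hν, hc.massOut_le⟩

end FullTopplings

section Transport

variable {G : SimpleGraph V} [G.LocallyFinite] {A : Set V} {p : ℝ} {μ₀ : V → ℝ} {t : ℕ}

lemma CanTransportFull.canTransport (h : CanTransportFull G A p μ₀ t) :
    CanTransport G A p μ₀ t :=
  let ⟨μs, h0, hstep, hp⟩ := h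
  ⟨μs t, ⟨μs, h0, rfl, fun i hi =>
    let ⟨v, hv, he⟩ := hstep i hi
    ⟨v, μs i v, hv, le_rfl, he⟩⟩, hp⟩

lemma CanTransport.exists_canTransportFull (hμ₀ : Summable μ₀) (h : CanTransport G A p μ₀ t) :
    ∃ t' ≤ t, CanTransportFull G A p μ₀ t' := by
  obtain ⟨μ, hseq, hp⟩ := h
  have hc : Chain (ToppleMove G Set.univ) μ₀ t μ :=
    let ⟨μs, h0, h1, hs⟩ := hseq
    ⟨μs, h0, h1, fun i hi =>
      let ⟨v, m, hm, hmv, he⟩ := hs i hi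
      ⟨v, trivial, m, hm, hmv, he⟩⟩
  obtain ⟨t₁, ht₁, ν₁, hc₁, hle₁⟩ := hc.exists_toppleMove_mem (A := A) hμ₀
  obtain ⟨t₂, ht₂, ν₂, ⟨μs, h0, hend, hstep⟩, hle₂⟩ := hc₁.exists_fullToppleMove hμ₀
  exact ⟨t₂, ht₂.trans ht₁, μs, h0, hstep, hend ▸ (hp.trans hle₁).trans hle₂⟩

end Transport

theorem minTopples_eq_minTopplesFull_general {V : Type*} (G : SimpleGraph V) [G.LocallyFinite]
    (A : Set V) (p : ℝ) (μ₀ : V → ℝ) (hμ : IsMassDist μ₀) :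
    minTopples G A p μ₀ = minTopplesFull G A p μ₀ := by
  apply le_antisymm
  · exact sInf_le_sInf fun _ ⟨t, hn, ht⟩ => ⟨t, hn, ht.canTransport⟩
  · refine le_sInf fun _ ⟨t, hn, ht⟩ => ?_
    obtain ⟨t', ht', hfull⟩ := ht.exists_canTransportFull (summable_of_hasFiniteSupport hμ.2)
    rw [hn]
    exact sInf_le_of_le (b := (t' : ℕ∞)) ⟨t', rfl, hfull⟩ (by exact_mod_cast ht')

/-- **Full topplings suffice** (Florescu–Peres–Rácz, Corollary 3.3).
Restricting every toppling move to topple all of the mass at the chosen vertex does not change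
the minimum number of toppling moves needed to transport mass `p` outside of `A`. -/
theorem minTopples_eq_minTopplesFull {V : Type*} (G : SimpleGraph V) [G.LocallyFinite]
    (A : Set V) (p : ℝ) (hp : 0 < p) (μ₀ : V → ℝ) (hμ : IsMassDist μ₀) :
    minTopples G A p μ₀ = minTopplesFull G A p μ₀ :=
  minTopples_eq_minTopplesFull_general G A p μ₀ hμ

end
end

section
/- Let (X_t)_{t≥0} be simple random walk on the comb graph C₂ started at the origin o = (0,0), writing X_t = (X_t^{(1)}, X_t^{(2)}) for its coordinates. For C > 0 and n ≥ 1 let R_{C,n} = {(x,y) ∈ ℤ² : |x| ≤ C√n, |y| ≤ n} and let T_{R_{C,n}} be the first exit time of the walk from R_{C,n}. Then for every ε > 0 there exists C = C(ε) < ∞ such that for every integer n ≥ 1, P_o(X_{T_{R_{C,n}}}^{(2)} = 0) ≤ ε; that is, the probability that the walk exits the rectangle through a vertex on the x-axis (rather than through the top or bottom of a tooth) is at most ε. -/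
open scoped Classical

noncomputable section

variable {V : Type*}
def combGraph : SimpleGraph (ℤ × ℤ) where
  Adj u v := (u.1 = v.1 ∧ |u.2 - v.2| = 1) ∨ (u.2 = 0 ∧ v.2 = 0 ∧ |u.1 - v.1| = 1)
  symm := by
    constructor
    rintro u v (⟨h1, h2⟩ | ⟨h1, h2, h3⟩)
    · exact Or.inl ⟨h1.symm, by rw [abs_sub_comm]; exact h2⟩
    · exact Or.inr ⟨h2, h1, by rw [abs_sub_comm]; exact h3⟩
  loopless := by
    constructor
    rintro u (⟨h1, h2⟩ | ⟨h1, h2, h3⟩)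
    · simp at h2
    · simp at h3

noncomputable instance combGraph.locallyFinite (u : ℤ × ℤ) :
    Fintype (combGraph.neighborSet u) :=
  Set.Finite.fintype <| by
    apply Set.Finite.subset
      ((((Set.finite_singleton ((u.1 - 1, 0) : ℤ × ℤ)).insert (u.1 + 1, 0)).insert
        (u.1, u.2 - 1)).insert (u.1, u.2 + 1))
    rintro ⟨a, b⟩ hv
    have hv' : (u.1 = a ∧ |u.2 - b| = 1) ∨ (u.2 = 0 ∧ b = 0 ∧ |u.1 - a| = 1) := hv
    simp only [Set.mem_insert_iff, Set.mem_singleton_iff, Prod.mk.injEq]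
    rcases hv' with ⟨h1, h2⟩ | ⟨h1, h2, h3⟩
    · rw [abs_eq (by norm_num : (0:ℤ) ≤ 1)] at h2
      omega
    · rw [abs_eq (by norm_num : (0:ℤ) ≤ 1)] at h3
      omega


/-- `killedKernel G A k x y` is the probability that simple random walk on `G` started at `x`
is at `y` at time `k` and has stayed inside `A` at all times `0, 1, …, k-1`. -/
def killedKernel (G : SimpleGraph V) [G.LocallyFinite] (A : Set V) : ℕ → V → V → ℝ
  | 0 => fun x y => if x = y then 1 else 0
  | (k + 1) => fun x y =>
      ∑ z ∈ G.neighborFinset y,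
        killedKernel G A k x z * (if z ∈ A then ((G.degree z : ℝ))⁻¹ else 0)

/-- The rectangle `R_{C,n} = [-C√n, C√n] × [-n, n]` in the comb graph. -/
def combRect (C : ℝ) (n : ℕ) : Set (ℤ × ℤ) :=
  {v | ((|v.1| : ℤ) : ℝ) ≤ C * Real.sqrt n ∧ |v.2| ≤ (n : ℤ)}

/-- The probability that simple random walk on the comb graph started at the origin exits the
rectangle `R_{C,n}` through a vertex on the x-axis: the walk stays in the rectangle up to some
time `k` and at time `k+...` first leaves it at a vertex whose second coordinate is `0`. -/
def exitAxisProb (C : ℝ) (n : ℕ) : ℝ :=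
  ∑' k : ℕ, ∑' v : ℤ × ℤ,
    if v ∉ combRect C n ∧ v.2 = 0 then killedKernel combGraph (combRect C n) k (0, 0) v else 0
/-! The function `h(x, y) = cosh (x / (2√n)) · max 0 (1 - |y| / (n + 1)) / cosh (C / 2)` is
nonnegative and superharmonic for the walk inside `R_{C,n}`: along a tooth the second factor is
concave, and on the axis the gain `cosh (1 / (2√n)) ≤ 1 + 1 / (n + 1)` of the two horizontal
steps is paid for by the loss of the two vertical ones. Stopped at the exit time, `h(X)` is a
supermartingale, so the probability of leaving through a vertex where `h ≥ 1` is at most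
`h(o) = 1 / cosh (C / 2)`. An axis vertex outside the rectangle has `|x| > C√n`, hence `h ≥ 1`
there, and `1 / cosh (C / 2) ≤ ε` for `C = 4 / ε`. -/

open Finset Real

section KilledWalk

variable (G : SimpleGraph V) [G.LocallyFinite] (A : Set V)

def SimpleGraph.SuperharmonicOn (h : V → ℝ) : Prop :=
  ∀ z ∈ A, ∑ w ∈ G.neighborFinset z, h w ≤ G.degree z * h z

def walkEndsFinset (x : V) : ℕ → Finset V
  | 0 => {x}
  | k + 1 => (walkEndsFinset x k).biUnion fun z => G.neighborFinset z

lemma neighborFinset_subset_walkEndsFinset_succ {x z : V} {k : ℕ}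
    (hz : z ∈ walkEndsFinset G x k) : G.neighborFinset z ⊆ walkEndsFinset G x (k + 1) :=
  subset_biUnion_of_mem (fun z => G.neighborFinset z) hz

lemma killedKernel_nonneg (k : ℕ) (x y : V) : 0 ≤ killedKernel G A k x y := by
  induction k generalizing y with
  | zero => unfold killedKernel; split_ifs <;> norm_num
  | succ k ih =>
    refine sum_nonneg fun z _ => mul_nonneg (ih z) ?_
    split_ifs <;> positivity

lemma killedKernel_eq_zero_of_notMem_walkEndsFinset {k : ℕ} {x y : V}
    (hy : y ∉ walkEndsFinset G x k) : killedKernel G A k x y = 0 := by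
  induction k generalizing y with
  | zero => exact if_neg fun hxy => hy (by simp [walkEndsFinset, hxy])
  | succ k ih =>
    refine sum_eq_zero fun z hz => ?_
    have hz : z ∉ walkEndsFinset G x k := fun hz' =>
      hy (neighborFinset_subset_walkEndsFinset_succ G hz'
        ((G.mem_neighborFinset _ _).2 ((G.mem_neighborFinset _ _).1 hz).symm))
    rw [ih hz, zero_mul]

lemma sum_killedKernel_succ_mul (x : V) (k : ℕ) (h : V → ℝ) :
    ∑ v ∈ walkEndsFinset G x (k + 1), killedKernel G A (k + 1) x v * h v =
      ∑ z ∈ walkEndsFinset G x k, killedKernel G A k x z *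
        (if z ∈ A then (G.degree z : ℝ)⁻¹ else 0) * ∑ w ∈ G.neighborFinset z, h w := by
  simp_rw [killedKernel, sum_mul, mul_sum]
  calc _ = ∑ v ∈ walkEndsFinset G x (k + 1), ∑ z ∈ G.neighborFinset v with
          z ∈ walkEndsFinset G x k, killedKernel G A k x z *
            (if z ∈ A then (G.degree z : ℝ)⁻¹ else 0) * h v := by
        refine sum_congr rfl fun v _ => (sum_filter_of_ne fun z _ hz => ?_).symm
        by_contra hz'
        simp [killedKernel_eq_zero_of_notMem_walkEndsFinset G A hz'] at hz
    _ = _ := sum_comm' fun v z => by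
        simp only [mem_filter, SimpleGraph.mem_neighborFinset]
        exact ⟨fun ⟨_, hvz, hz⟩ => ⟨hvz.symm, hz⟩, fun ⟨hzv, hz⟩ =>
          ⟨neighborFinset_subset_walkEndsFinset_succ G hz ((G.mem_neighborFinset _ _).2 hzv),
            hzv.symm, hz⟩⟩

variable {G A}

lemma sum_killedKernel_succ_mul_add_exit_le {h : V → ℝ} (h_nonneg : ∀ v, 0 ≤ h v)
    (h_super : G.SuperharmonicOn A h) (x : V) (k : ℕ) :
    ∑ v ∈ walkEndsFinset G x (k + 1), killedKernel G A (k + 1) x v * h v +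
        ∑ v ∈ walkEndsFinset G x k, (if v ∈ A then 0 else killedKernel G A k x v * h v) ≤
      ∑ v ∈ walkEndsFinset G x k, killedKernel G A k x v * h v := by
  rw [sum_killedKernel_succ_mul, ← sum_add_distrib]
  refine sum_le_sum fun z _ => ?_
  by_cases hz : z ∈ A
  · have hmean : (G.degree z : ℝ)⁻¹ * ∑ w ∈ G.neighborFinset z, h w ≤ h z := by
      rcases (Nat.zero_le (G.degree z)).eq_or_lt with hd | hd
      · simp [← hd, h_nonneg]
      · exact (inv_mul_le_iff₀ (by exact_mod_cast hd)).2 (h_super z hz)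
    simpa only [if_pos hz, add_zero, mul_assoc] using
      mul_le_mul_of_nonneg_left hmean (killedKernel_nonneg G A k x z)
  · simp [hz]

lemma sum_range_exit_le {h : V → ℝ} (h_nonneg : ∀ v, 0 ≤ h v)
    (h_super : G.SuperharmonicOn A h) (x : V) (K : ℕ) :
    ∑ k ∈ range K, ∑ v ∈ walkEndsFinset G x k,
      (if v ∈ A then 0 else killedKernel G A k x v * h v) ≤ h x := by
  have telescope : ∑ k ∈ range K, ∑ v ∈ walkEndsFinset G x k,
      (if v ∈ A then 0 else killedKernel G A k x v * h v) +
        ∑ v ∈ walkEndsFinset G x K, killedKernel G A K x v * h v ≤ h x := by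
    induction K with
    | zero => simp [walkEndsFinset, killedKernel]
    | succ K ih =>
      rw [sum_range_succ]
      linarith [sum_killedKernel_succ_mul_add_exit_le h_nonneg h_super x K]
  have hmass : 0 ≤ ∑ v ∈ walkEndsFinset G x K, killedKernel G A K x v * h v :=
    sum_nonneg fun v _ => mul_nonneg (killedKernel_nonneg G A K x v) (h_nonneg v)
  linarith

theorem tsum_exit_le_of_superharmonic (P : V → Prop) [DecidablePred P] {h : V → ℝ}
    (h_nonneg : ∀ v, 0 ≤ h v)
    (h_super : G.SuperharmonicOn A h)
    (h_exit : ∀ v, v ∉ A → P v → 1 ≤ h v) (x : V) :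
    ∑' k : ℕ, ∑' v : V, (if v ∉ A ∧ P v then killedKernel G A k x v else 0) ≤ h x := by
  have hfin : ∀ k, ∑' v : V, (if v ∉ A ∧ P v then killedKernel G A k x v else 0) =
      ∑ v ∈ walkEndsFinset G x k, (if v ∉ A ∧ P v then killedKernel G A k x v else 0) :=
    fun k => tsum_eq_sum fun v hv => by
      simp [killedKernel_eq_zero_of_notMem_walkEndsFinset G A hv]
  simp_rw [hfin]
  refine Real.tsum_le_of_sum_range_le
    (fun k => sum_nonneg fun v _ => ?_)
    fun K => le_trans ?_ (sum_range_exit_le h_nonneg h_super x K)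
  · split_ifs <;> simp [killedKernel_nonneg]
  · refine sum_le_sum fun k _ => sum_le_sum fun v _ => ?_
    have hK := killedKernel_nonneg G A k x v
    by_cases hA : v ∈ A
    · simp [hA]
    by_cases hP : P v
    · simpa [hA, hP] using mul_le_mul_of_nonneg_left (h_exit v hA hP) hK
    · simpa [hA, hP] using mul_nonneg hK (h_nonneg v)

end KilledWalk

namespace combGraph

lemma adj_iff {u v : ℤ × ℤ} : combGraph.Adj u v ↔
    (u.1 = v.1 ∧ (u.2 - v.2 = 1 ∨ u.2 - v.2 = -1)) ∨
      (u.2 = 0 ∧ v.2 = 0 ∧ (u.1 - v.1 = 1 ∨ u.1 - v.1 = -1)) := by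
  change (_ ∧ |_| = 1) ∨ (_ ∧ _ ∧ |_| = 1) ↔ _
  simp only [abs_eq zero_le_one]

lemma neighborFinset_of_ne_zero (x : ℤ) {y : ℤ} (hy : y ≠ 0) :
    combGraph.neighborFinset (x, y) = {(x, y + 1), (x, y - 1)} := by
  ext ⟨a, b⟩
  simp only [SimpleGraph.mem_neighborFinset, adj_iff, mem_insert, mem_singleton, Prod.mk.injEq]
  omega

lemma neighborFinset_zero (x : ℤ) :
    combGraph.neighborFinset (x, 0) = {(x + 1, 0), (x - 1, 0), (x, 1), (x, -1)} := by
  ext ⟨a, b⟩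
  simp only [SimpleGraph.mem_neighborFinset, adj_iff, mem_insert, mem_singleton, Prod.mk.injEq,
    true_and]
  omega

end combGraph

def toothWeight (n : ℕ) (y : ℤ) : ℝ := max 0 (1 - |(y : ℝ)| / (n + 1))

lemma toothWeight_of_abs_le {n : ℕ} {y : ℤ} (hy : |y| ≤ n + 1) :
    toothWeight n y = 1 - |(y : ℝ)| / (n + 1) := by
  refine max_eq_right (sub_nonneg.2 ((div_le_one (by positivity)).2 ?_))
  exact_mod_cast hy

lemma toothWeight_zero (n : ℕ) : toothWeight n 0 = 1 := by simp [toothWeight]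

lemma toothWeight_add_one_add_sub_one_le {n : ℕ} {y : ℤ} (hy : |y| ≤ n) :
    toothWeight n (y + 1) + toothWeight n (y - 1) ≤ 2 * toothWeight n y := by
  obtain ⟨hy₁, hy₂⟩ := abs_le.1 hy
  rw [toothWeight_of_abs_le (abs_le.2 ⟨by omega, by omega⟩),
    toothWeight_of_abs_le (abs_le.2 ⟨by omega, by omega⟩),
    toothWeight_of_abs_le (by linarith)]
  have htri : 2 * |(y : ℝ)| ≤ |(y : ℝ) + 1| + |(y : ℝ) - 1| := by
    simpa [abs_mul, ← two_mul] using abs_add_le ((y : ℝ) + 1) ((y : ℝ) - 1)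
  have hn : (0 : ℝ) < n + 1 := by positivity
  push_cast
  field_simp
  linarith

lemma cosh_inv_two_sqrt_le {n : ℕ} (hn : 1 ≤ n) :
    cosh (1 / (2 * √n)) ≤ 1 + 1 / (n + 1) := by
  have hn' : (1 : ℝ) ≤ n := by exact_mod_cast hn
  have hsq : (1 / (2 * √n)) ^ 2 / 2 = 1 / (8 * n) := by
    rw [div_pow, mul_pow, Real.sq_sqrt (by positivity)]
    ring
  have hsmall : |1 / (8 * (n : ℝ))| ≤ 1 := by
    rw [abs_of_pos (by positivity), div_le_one (by positivity)]
    linarith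
  have hexp := (abs_le.1 (Real.abs_exp_sub_one_le hsmall)).2
  rw [abs_of_pos (by positivity)] at hexp
  have hfrac : 2 * (1 / (8 * (n : ℝ))) ≤ 1 / (n + 1) := by
    calc 2 * (1 / (8 * (n : ℝ))) = 1 / (4 * n) := by ring
      _ ≤ 1 / (n + 1) := one_div_le_one_div_of_le (by positivity) (by linarith)
  calc cosh (1 / (2 * √n)) ≤ exp (1 / (8 * n)) := hsq ▸ cosh_le_exp_half_sq _
    _ ≤ 1 + 1 / (n + 1) := by linarith

def combWeight (n : ℕ) (v : ℤ × ℤ) : ℝ := cosh (v.1 / (2 * √n)) * toothWeight n v.2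

lemma combWeight_nonneg (n : ℕ) (v : ℤ × ℤ) : 0 ≤ combWeight n v :=
  mul_nonneg (cosh_pos _).le (le_max_left _ _)

lemma combWeight_superharmonicOn {n : ℕ} (hn : 1 ≤ n) :
    combGraph.SuperharmonicOn {v | |v.2| ≤ n} (combWeight n) := by
  rintro ⟨x, y⟩ hv
  rw [← SimpleGraph.card_neighborFinset_eq_degree]
  rcases eq_or_ne y 0 with rfl | hy
  · have h1 : toothWeight n 1 = 1 - 1 / (n + 1) := by simp [toothWeight_of_abs_le]
    have ht1 : toothWeight n (-1) = 1 - 1 / (n + 1) := by simp [toothWeight_of_abs_le]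
    have hcosh : cosh ((x + 1) / (2 * √n)) + cosh ((x - 1) / (2 * √n)) =
        2 * cosh (x / (2 * √n)) * cosh (1 / (2 * √n)) := by
      rw [add_div, sub_div, cosh_add, cosh_sub]
      ring
    have := mul_le_mul_of_nonneg_left (cosh_inv_two_sqrt_le hn) (cosh_pos (x / (2 * √n) : ℝ)).le
    rw [combGraph.neighborFinset_zero, sum_insert (by simp; omega), sum_insert (by simp),
      sum_pair (by simp), card_insert_of_notMem (by simp; omega),
      card_insert_of_notMem (by simp), card_pair (by simp)]
    simp only [combWeight, h1, ht1, toothWeight_zero]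
    push_cast
    linarith
  · rw [combGraph.neighborFinset_of_ne_zero x hy, sum_pair (by simp; omega),
      card_pair (by simp; omega)]
    simp only [combWeight]
    have := mul_le_mul_of_nonneg_left (toothWeight_add_one_add_sub_one_le hv)
      (cosh_pos (x / (2 * √n) : ℝ)).le
    push_cast
    linarith

lemma cosh_half_le_combWeight {C : ℝ} (hC : 0 ≤ C) {n : ℕ} (hn : 1 ≤ n) {v : ℤ × ℤ}
    (hv : v ∉ combRect C n) (hv₂ : v.2 = 0) : cosh (C / 2) ≤ combWeight n v := by
  obtain ⟨x, y⟩ := v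
  simp only at hv₂
  subst hv₂
  have hx : C * √n ≤ |(x : ℝ)| := by
    by_contra! hx
    exact hv ⟨by exact_mod_cast hx.le, by simp⟩
  rw [combWeight, toothWeight_zero, mul_one, cosh_le_cosh, abs_of_nonneg (by positivity),
    abs_div, abs_of_pos (by positivity : 0 < 2 * √(n : ℝ)),
    div_le_div_iff₀ two_pos (by positivity)]
  linarith

lemma exitAxisProb_le {C : ℝ} (hC : 0 ≤ C) {n : ℕ} (hn : 1 ≤ n) :
    exitAxisProb C n ≤ (cosh (C / 2))⁻¹ := by
  have hc := cosh_pos (C / 2)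
  unfold exitAxisProb
  simpa [combWeight, toothWeight_zero, div_eq_inv_mul] using
    tsum_exit_le_of_superharmonic (G := combGraph) (A := combRect C n) (fun v => v.2 = 0)
      (h := fun v => combWeight n v / cosh (C / 2))
      (fun v => div_nonneg (combWeight_nonneg n v) hc.le)
      (fun z hz => by
        rw [← sum_div, mul_div_assoc']
        exact div_le_div_of_nonneg_right (combWeight_superharmonicOn hn z hz.2) hc.le)
      (fun v hv hv₂ => (one_le_div hc).2 (cosh_half_le_combWeight hC hn hv hv₂)) (0, 0)

/-- **Exit through the teeth of the comb** (Florescu–Peres–Rácz, Lemma 5.1).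
For every `ε > 0` there is `C = C(ε) < ∞` such that for every `n ≥ 1`, simple random walk on the
comb graph started at the origin exits the rectangle `R_{C,n} = [-C√n, C√n] × [-n, n]` through a
vertex on the x-axis with probability at most `ε`. -/
theorem comb_exit_through_axis (ε : ℝ) (hε : 0 < ε) :
    ∃ C : ℝ, 0 < C ∧ ∀ n : ℕ, 1 ≤ n → exitAxisProb C n ≤ ε := by
  refine ⟨4 / ε, by positivity, fun n hn => (exitAxisProb_le (by positivity) hn).trans ?_⟩
  rw [inv_le_comm₀ (cosh_pos _) hε, ← one_div, cosh_eq]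
  linarith [add_one_le_exp (4 / ε / 2), exp_pos (-(4 / ε / 2)),
    show 4 / ε / 2 = 2 * (1 / ε) by ring]
end
end
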